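/- If w* = N_R/(N_T+N_R), then for all w ∈ [0,1], 1/N_eff(w) - 1/N = (w - w*)² · (1/N_T + 1/N_R), i.e., the reciprocal effective sample size degrades quadratically in the distance of w from w*. -/
import Mathlib

/-- If `w* = N_R/(N_T+N_R)`, then for all `w ∈ [0,1]`,
`1/N_eff(w) - 1/N = (w - w*)² · (1/N_T + 1/N_R)`. -/
theorem stmt_2 (NT NR : ℝ) (hNT : 0 < NT) (hNR : 0 < NR)
    (Neff : ℝ → ℝ) (hNeff : ∀ w, Neff w = ((1 - w) ^ 2 / NT + w ^ 2 / NR)⁻¹)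
    (wstar : ℝ) (hwstar : wstar = NR / (NT + NR)) :
    ∀ w ∈ Set.Icc (0 : ℝ) 1,
      1 / Neff w - 1 / (NT + NR) = (w - wstar) ^ 2 * (1 / NT + 1 / NR) := by
  intro w _
  rw [hNeff, hwstar, one_div, inv_inv]
  have h1 : NT ≠ 0 := hNT.ne'
  have h2 : NR ≠ 0 := hNR.ne'
  have h3 : NT + NR ≠ 0 := by positivity
  field_simp
  ring
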